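/- For all ρ₁, p₁, q₁, ρ₂, p₂, q₂ ∈ ℝ one has the product law 𝔏(ρ₁,p₁,q₁)·𝔏(ρ₂,p₂,q₂) = 𝔏(ρ₁ + ρ₂ + 4·q₁·p₂, p₁ + p₂, q₁ + q₂). In particular 𝔏(0,0,0) = I₆, each 𝔏(ρ,p,q) is invertible with 𝔏(ρ,p,q)⁻¹ = 𝔏(4pq − ρ, −p, −q), and the set {𝔏(ρ,p,q) : ρ,p,q ∈ ℝ} is a non-abelian (Heisenberg-type) subgroup of GL(6,ℝ). Moreover each 𝔏(ρ,p,q) satisfies 𝔏ᵀ·η·𝔏 = η, where η is the 6×6 symmetric matrix with ones exactly in entries (1,6), (6,1), (2,5), (5,2), (3,3), (4,4) and zeros elsewhere. -/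
import Mathlib


open Matrix

/-- The `6×6` matrix `𝔏(ρ,p,q)`: the identity except for the entries
`𝔏₁₄ = 2p`, `𝔏₁₅ = ρ − 4pq`, `𝔏₁₆ = −2p²`, `𝔏₂₄ = 2q`, `𝔏₂₅ = −2q²`, `𝔏₂₆ = −ρ`,
`𝔏₄₅ = −2q`, `𝔏₄₆ = −2p`. -/
def frakL (ρ p q : ℝ) : Matrix (Fin 6) (Fin 6) ℝ :=
  !![1, 0, 0, 2 * p, ρ - 4 * p * q, -2 * p ^ 2;
     0, 1, 0, 2 * q, -2 * q ^ 2, -ρ;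
     0, 0, 1, 0, 0, 0;
     0, 0, 0, 1, -2 * q, -2 * p;
     0, 0, 0, 0, 1, 0;
     0, 0, 0, 0, 0, 1]

/-- The `6×6` symmetric matrix with ones exactly in entries
`(1,6), (6,1), (2,5), (5,2), (3,3), (4,4)`. -/
def etaFrak : Matrix (Fin 6) (Fin 6) ℝ :=
  !![0, 0, 0, 0, 0, 1;
     0, 0, 0, 0, 1, 0;
     0, 0, 1, 0, 0, 0;
     0, 0, 0, 1, 0, 0;
     0, 1, 0, 0, 0, 0;
     1, 0, 0, 0, 0, 0]

section Aux
variable {α : Type*} (a b c d e f : α)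
lemma v6_0 : ![a,b,c,d,e,f] 0 = a := rfl
lemma v6_1 : ![a,b,c,d,e,f] 1 = b := rfl
lemma v6_2 : ![a,b,c,d,e,f] 2 = c := rfl
lemma v6_3 : ![a,b,c,d,e,f] 3 = d := rfl
lemma v6_4 : ![a,b,c,d,e,f] 4 = e := rfl
lemma v6_5 : ![a,b,c,d,e,f] 5 = f := rfl
lemma w6_0 (h) : ![a,b,c,d,e,f] ⟨0,h⟩ = a := rfl
lemma w6_1 (h) : ![a,b,c,d,e,f] ⟨1,h⟩ = b := rfl
lemma w6_2 (h) : ![a,b,c,d,e,f] ⟨2,h⟩ = c := rfl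
lemma w6_3 (h) : ![a,b,c,d,e,f] ⟨3,h⟩ = d := rfl
lemma w6_4 (h) : ![a,b,c,d,e,f] ⟨4,h⟩ = e := rfl
lemma w6_5 (h) : ![a,b,c,d,e,f] ⟨5,h⟩ = f := rfl
end Aux

set_option maxHeartbeats 2000000 in
lemma frakL_mul (a₁ b₁ c₁ a₂ b₂ c₂ : ℝ) :
    frakL a₁ b₁ c₁ * frakL a₂ b₂ c₂
      = frakL (a₁ + a₂ + 4 * c₁ * b₂) (b₁ + b₂) (c₁ + c₂) := by
  ext i j
  fin_cases i <;> fin_cases j <;>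
    simp only [frakL, Matrix.mul_apply, Fin.sum_univ_six, Matrix.of_apply,
      v6_0, v6_1, v6_2, v6_3, v6_4, v6_5,
      w6_0, w6_1, w6_2, w6_3, w6_4, w6_5] <;> ring

set_option maxHeartbeats 2000000 in
lemma frakL_zero : frakL 0 0 0 = 1 := by
  ext i j
  fin_cases i <;> fin_cases j <;>
    simp only [frakL, Matrix.one_apply, Matrix.of_apply,
      v6_0, v6_1, v6_2, v6_3, v6_4, v6_5,
      w6_0, w6_1, w6_2, w6_3, w6_4, w6_5] <;>
    norm_num [Fin.ext_iff]

set_option maxHeartbeats 2000000 in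
lemma frakL_eta (ρ p q : ℝ) :
    (frakL ρ p q)ᵀ * etaFrak * frakL ρ p q = etaFrak := by
  ext i j
  fin_cases i <;> fin_cases j <;>
    simp only [frakL, etaFrak, Matrix.mul_apply, Matrix.transpose_apply,
      Fin.sum_univ_six, Matrix.of_apply,
      v6_0, v6_1, v6_2, v6_3, v6_4, v6_5,
      w6_0, w6_1, w6_2, w6_3, w6_4, w6_5] <;> ring

/-- **The Heisenberg-type group `{𝔏(ρ,p,q)}`.**
Product law `𝔏(ρ₁,p₁,q₁)·𝔏(ρ₂,p₂,q₂) = 𝔏(ρ₁+ρ₂+4q₁p₂, p₁+p₂, q₁+q₂)`; `𝔏(0,0,0) = 1`;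
`𝔏(ρ,p,q)⁻¹ = 𝔏(4pq−ρ,−p,−q)`; the group is non-abelian; and `𝔏ᵀ·η·𝔏 = η`. -/
theorem stmt_9 (ρ₁ p₁ q₁ ρ₂ p₂ q₂ ρ p q : ℝ) :
    frakL ρ₁ p₁ q₁ * frakL ρ₂ p₂ q₂
      = frakL (ρ₁ + ρ₂ + 4 * q₁ * p₂) (p₁ + p₂) (q₁ + q₂) ∧
    frakL 0 0 0 = 1 ∧
    frakL ρ p q * frakL (4 * p * q - ρ) (-p) (-q) = 1 ∧
    frakL (4 * p * q - ρ) (-p) (-q) * frakL ρ p q = 1 ∧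
    (∃ ρ₁' p₁' q₁' ρ₂' p₂' q₂' : ℝ,
      frakL ρ₁' p₁' q₁' * frakL ρ₂' p₂' q₂' ≠ frakL ρ₂' p₂' q₂' * frakL ρ₁' p₁' q₁') ∧
    (frakL ρ p q)ᵀ * etaFrak * frakL ρ p q = etaFrak := by
  refine ⟨frakL_mul _ _ _ _ _ _, frakL_zero, ?_, ?_, ?_, frakL_eta ρ p q⟩
  · rw [frakL_mul, show ρ + (4 * p * q - ρ) + 4 * q * (-p) = 0 by ring,
      show p + -p = 0 by ring, show q + -q = 0 by ring, frakL_zero]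
  · rw [frakL_mul, show 4 * p * q - ρ + ρ + 4 * (-q) * p = 0 by ring,
      show -p + p = 0 by ring, show -q + q = 0 by ring, frakL_zero]
  · refine ⟨0, 0, 1, 0, 1, 0, fun h => ?_⟩
    rw [frakL_mul, frakL_mul] at h
    have h2 := congrFun (congrFun h 1) 5
    simp only [frakL, Matrix.of_apply, v6_1, v6_5] at h2
    norm_num at h2
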